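/- For every pair of distinct vertices x, y of G, the function h(α) = κ_α(x,y)/(1−α) is nondecreasing on [0,1) and bounded above by 2/d(x,y); consequently the limit lim_{α→1⁻} κ_α(x,y)/(1−α) exists and is at most 2/d(x,y). -/

import Mathlib

open Finset Filter Topology

noncomputable section

/-- A coupling between two (probability) mass functions `μ` and `ν` on a finite
vertex set: a matrix with values in `[0,1]` whose row sums are `μ` and whose
column sums are `ν`. -/
def IsCoupling {V : Type*} [Fintype V] (A : V → V → ℝ) (μ ν : V → ℝ) : Prop :=
  (∀ x y, 0 ≤ A x y ∧ A x y ≤ 1) ∧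
  (∀ x, ∑ y, A x y = μ x) ∧
  (∀ y, ∑ x, A x y = ν y)

/-- The (1-)Wasserstein distance between two mass functions on the vertex set of a
graph, with respect to the graph distance. -/
def Wass {V : Type*} [Fintype V] (G : SimpleGraph V) (μ ν : V → ℝ) : ℝ :=
  sInf {c | ∃ A : V → V → ℝ, IsCoupling A μ ν ∧
    c = ∑ x, ∑ y, A x y * (G.dist x y : ℝ)}

/-- The probability measure `m_x^α`: mass `α` at `x`, mass `(1-α)/d_x` at each
neighbor of `x`, and `0` elsewhere. -/
def mMeas {V : Type*} [Fintype V] [DecidableEq V] (G : SimpleGraph V)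
    [DecidableRel G.Adj] (α : ℝ) (x : V) : V → ℝ :=
  fun z => if z = x then α else if G.Adj x z then (1 - α) / (G.degree x : ℝ) else 0

/-- The `α`-Ricci curvature `κ_α(x,y) = 1 - W(m_x^α, m_y^α)/d(x,y)`. -/
def kappaAlpha {V : Type*} [Fintype V] [DecidableEq V] (G : SimpleGraph V)
    [DecidableRel G.Adj] (α : ℝ) (x y : V) : ℝ :=
  1 - Wass G (mMeas G α x) (mMeas G α y) / (G.dist x y : ℝ)

/-- The Lin–Lu–Yau Ricci curvature `κ(x,y) = lim_{α→1⁻} κ_α(x,y)/(1-α)`. -/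
def kappa {V : Type*} [Fintype V] [DecidableEq V] (G : SimpleGraph V)
    [DecidableRel G.Adj] (x y : V) : ℝ :=
  limUnder (𝓝[<] (1 : ℝ)) (fun α => kappaAlpha G α x y / (1 - α))

/-- The (non-normalized) graph Laplacian `(Δf)(x) = d_x f(x) - ∑_{y ~ x} f(y)`. -/
def lap {V : Type*} [Fintype V] [DecidableEq V] (G : SimpleGraph V)
    [DecidableRel G.Adj] (f : V → ℝ) (x : V) : ℝ :=
  (G.degree x : ℝ) * f x - ∑ y ∈ G.neighborFinset x, f y

end

/-!
Write `m_x^α` as a mixture of the lazier walk and a Dirac mass: for `a ≤ b < 1` and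
`c = (1-b)/(1-a)`, `m_x^b = c·m_x^a + (1-c)·δ_x`. Mixing an optimal coupling of `m_x^a, m_y^a`
with `δ_x ⊗ δ_y` gives `W_b ≤ c·W_a + (1-c)·d(x,y)`, i.e. `κ_b ≥ c·κ_a`, which is the
monotonicity of `κ_α/(1-α)`. Testing the couplings against the 1-Lipschitz function `d(·,y)`
gives `W_α ≥ d(x,y) - 2(1-α)`, i.e. `κ_α/(1-α) ≤ 2/d(x,y)`. A bounded monotone function has a
left limit at `1`.
-/

open Finset Filter Topology SimpleGraph

section Coupling

variable {V : Type*} [Fintype V] (G : SimpleGraph V)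

noncomputable def couplingCost (A : V → V → ℝ) : ℝ :=
  ∑ u, ∑ v, A u v * (G.dist u v : ℝ)

variable {G} {A B : V → V → ℝ} {μ ν μ' ν' : V → ℝ}

lemma couplingCost_nonneg (hA : IsCoupling A μ ν) : 0 ≤ couplingCost G A :=
  sum_nonneg fun u _ => sum_nonneg fun v _ => mul_nonneg (hA.1 u v).1 (Nat.cast_nonneg _)

lemma wass_le_couplingCost (hA : IsCoupling A μ ν) : Wass G μ ν ≤ couplingCost G A :=
  csInf_le ⟨0, by rintro _ ⟨B, hB, rfl⟩; exact couplingCost_nonneg hB⟩ ⟨A, hA, rfl⟩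

lemma le_wass {c : ℝ} (hne : ∃ A, IsCoupling A μ ν)
    (h : ∀ A, IsCoupling A μ ν → c ≤ couplingCost G A) : c ≤ Wass G μ ν := by
  obtain ⟨A, hA⟩ := hne
  exact le_csInf ⟨_, A, hA, rfl⟩ (by rintro _ ⟨B, hB, rfl⟩; exact h B hB)

lemma isCoupling_mul (hμ : ∀ z, 0 ≤ μ z) (hν : ∀ z, 0 ≤ ν z)
    (hμ1 : ∑ z, μ z = 1) (hν1 : ∑ z, ν z = 1) :
    IsCoupling (fun u v => μ u * ν v) μ ν := by
  have hle : ∀ {ρ : V → ℝ}, (∀ z, 0 ≤ ρ z) → ∑ z, ρ z = 1 → ∀ z, ρ z ≤ 1 := fun h0 h1 z =>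
    h1 ▸ single_le_sum (fun z _ => h0 z) (mem_univ z)
  refine ⟨fun u v => ⟨mul_nonneg (hμ u) (hν v), ?_⟩, fun u => ?_, fun v => ?_⟩
  · exact mul_le_one₀ (hle hμ hμ1 u) (hν v) (hle hν hν1 v)
  · rw [← mul_sum, hν1, mul_one]
  · rw [← sum_mul, hμ1, one_mul]

lemma isCoupling_convexComb {t : ℝ} (ht0 : 0 ≤ t) (ht1 : t ≤ 1)
    (hA : IsCoupling A μ ν) (hB : IsCoupling B μ' ν') :
    IsCoupling (fun u v => t * A u v + (1 - t) * B u v)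
      (fun z => t * μ z + (1 - t) * μ' z) (fun z => t * ν z + (1 - t) * ν' z) := by
  obtain ⟨hA01, hArow, hAcol⟩ := hA
  obtain ⟨hB01, hBrow, hBcol⟩ := hB
  refine ⟨fun u v => ⟨?_, ?_⟩, fun u => ?_, fun v => ?_⟩
  · nlinarith [hA01 u v, hB01 u v]
  · nlinarith [hA01 u v, hB01 u v]
  · simp only [sum_add_distrib, ← mul_sum, hArow, hBrow]
  · simp only [sum_add_distrib, ← mul_sum, hAcol, hBcol]

lemma couplingCost_convexComb (t : ℝ) :
    couplingCost G (fun u v => t * A u v + (1 - t) * B u v)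
      = t * couplingCost G A + (1 - t) * couplingCost G B := by
  simp only [couplingCost, add_mul, mul_assoc, sum_add_distrib, mul_sum]

lemma wass_convexComb_le {t : ℝ} (ht0 : 0 < t) (ht1 : t ≤ 1) (hne : ∃ A, IsCoupling A μ ν)
    (hB : IsCoupling B μ' ν') :
    Wass G (fun z => t * μ z + (1 - t) * μ' z) (fun z => t * ν z + (1 - t) * ν' z)
      ≤ t * Wass G μ ν + (1 - t) * couplingCost G B := by
  set W := Wass G (fun z => t * μ z + (1 - t) * μ' z) (fun z => t * ν z + (1 - t) * ν' z)
  have key : (W - (1 - t) * couplingCost G B) / t ≤ Wass G μ ν := by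
    refine le_wass hne fun A hA => (div_le_iff₀' ht0).2 ?_
    have := wass_le_couplingCost (G := G) (isCoupling_convexComb ht0.le ht1 hA hB)
    rw [couplingCost_convexComb] at this
    linarith
  rw [div_le_iff₀' ht0] at key
  linarith

lemma sum_sub_sum_le_couplingCost {f : V → ℝ} (hf : ∀ u v, f u - f v ≤ G.dist u v)
    (hA : IsCoupling A μ ν) :
    ∑ u, f u * μ u - ∑ v, f v * ν v ≤ couplingCost G A := by
  obtain ⟨hA01, hrow, hcol⟩ := hA
  calc ∑ u, f u * μ u - ∑ v, f v * ν v = ∑ u, ∑ v, A u v * f u - ∑ u, ∑ v, A u v * f v := by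
        rw [sum_comm (f := fun u v => A u v * f v)]
        simp only [← hrow, ← hcol, mul_sum, mul_comm]
    _ = ∑ u, ∑ v, A u v * (f u - f v) := by simp only [mul_sub, sum_sub_distrib]
    _ ≤ couplingCost G A :=
        sum_le_sum fun u _ => sum_le_sum fun v _ => mul_le_mul_of_nonneg_left (hf u v) (hA01 u v).1

lemma sum_sub_sum_le_wass {f : V → ℝ} (hf : ∀ u v, f u - f v ≤ G.dist u v)
    (hne : ∃ A, IsCoupling A μ ν) :
    ∑ u, f u * μ u - ∑ v, f v * ν v ≤ Wass G μ ν :=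
  le_wass hne fun _ hA => sum_sub_sum_le_couplingCost hf hA

lemma couplingCost_dirac [DecidableEq V] (x y : V) :
    couplingCost G (fun u v => (if u = x then (1 : ℝ) else 0) * (if v = y then 1 else 0))
      = G.dist x y := by
  simp [couplingCost, ite_mul]

end Coupling

section RandomWalk

variable {V : Type*} [Fintype V] [DecidableEq V] {G : SimpleGraph V} [DecidableRel G.Adj]

lemma mMeas_nonneg {α : ℝ} (h0 : 0 ≤ α) (h1 : α ≤ 1) (x z : V) : 0 ≤ mMeas G α x z := by
  unfold mMeas
  split_ifs
  exacts [h0, div_nonneg (by linarith) (Nat.cast_nonneg _), le_rfl]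

lemma sum_mul_mMeas (α : ℝ) (x : V) (f : V → ℝ) :
    ∑ u, f u * mMeas G α x u
      = α * f x + (1 - α) / G.degree x * ∑ u ∈ G.neighborFinset x, f u := by
  have hsplit : ∀ u, f u * mMeas G α x u = (if u = x then α * f x else 0)
      + (if u ∈ G.neighborFinset x then (1 - α) / G.degree x * f u else 0) := by
    intro u
    by_cases hux : u = x
    · subst hux; simp [mMeas, mul_comm]
    · simp [mMeas, hux, mul_comm]
  simp only [hsplit, sum_add_distrib, sum_ite_eq', mem_univ, if_true, sum_ite_mem, univ_inter,
    mul_sum]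

lemma sum_mMeas {α : ℝ} {x : V} (hx : 0 < G.degree x) : ∑ z, mMeas G α x z = 1 := by
  have h := sum_mul_mMeas (G := G) α x fun _ => 1
  simp only [one_mul, sum_const, card_neighborFinset_eq_degree, nsmul_eq_mul, mul_one] at h
  rw [h, div_mul_cancel₀ _ (by positivity)]
  ring

lemma exists_isCoupling_mMeas [Nontrivial V] (hG : G.Preconnected) {α : ℝ} (h0 : 0 ≤ α)
    (h1 : α ≤ 1) (x y : V) : ∃ A, IsCoupling A (mMeas G α x) (mMeas G α y) :=
  ⟨_, isCoupling_mul (mMeas_nonneg h0 h1 x) (mMeas_nonneg h0 h1 y)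
    (sum_mMeas (hG.degree_pos_of_nontrivial x)) (sum_mMeas (hG.degree_pos_of_nontrivial y))⟩

lemma mMeas_eq_convexComb {a : ℝ} (ha : a ≠ 1) (b : ℝ) (x : V) :
    mMeas G b x = fun z => (1 - b) / (1 - a) * mMeas G a x z
      + (1 - (1 - b) / (1 - a)) * (if z = x then 1 else 0) := by
  have ha' : 1 - a ≠ 0 := sub_ne_zero.2 (Ne.symm ha)
  ext z
  by_cases hzx : z = x
  · simp only [mMeas, hzx, if_true]
    field_simp
    ring
  · by_cases hadj : G.Adj x z
    · have : (G.degree x : ℝ) ≠ 0 := by exact_mod_cast hadj.degree_pos_left.ne'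
      simp only [mMeas, hzx, hadj, if_true, if_false]
      field_simp
      ring
    · simp [mMeas, hzx, hadj]

lemma wass_mMeas_le [Nontrivial V] (hG : G.Preconnected) {a b : ℝ} (h0 : 0 ≤ a) (hab : a ≤ b)
    (hb : b < 1) (x y : V) :
    Wass G (mMeas G b x) (mMeas G b y)
      ≤ (1 - b) / (1 - a) * Wass G (mMeas G a x) (mMeas G a y)
        + (1 - (1 - b) / (1 - a)) * G.dist x y := by
  have ha : a ≠ 1 := (hab.trans_lt hb).ne
  have hc0 : 0 < (1 - b) / (1 - a) := div_pos (by linarith) (by linarith)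
  have hc1 : (1 - b) / (1 - a) ≤ 1 := (div_le_one (by linarith)).2 (by linarith)
  have hdirac := isCoupling_mul (fun z => by positivity) (fun z => by positivity)
    (Fintype.sum_ite_eq' x (fun _ => (1 : ℝ))) (Fintype.sum_ite_eq' y (fun _ => (1 : ℝ)))
  rw [mMeas_eq_convexComb ha b x, mMeas_eq_convexComb ha b y, ← couplingCost_dirac x y]
  exact wass_convexComb_le hc0 hc1 (exists_isCoupling_mMeas hG h0 (hab.trans hb.le) x y) hdirac

lemma dist_sub_le_wass_mMeas [Nontrivial V] (hG : G.Connected) {α : ℝ} (h0 : 0 ≤ α)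
    (h1 : α ≤ 1) (x y : V) :
    G.dist x y - 2 * (1 - α) ≤ Wass G (mMeas G α x) (mMeas G α y) := by
  have hdeg : ∀ v, (G.degree v : ℝ) ≠ 0 := fun v =>
    by exact_mod_cast (hG.preconnected.degree_pos_of_nontrivial v).ne'
  set f : V → ℝ := fun u => G.dist u y
  have hLip : ∀ u v, f u - f v ≤ G.dist u v := fun u v => by
    have : (G.dist u y : ℝ) ≤ G.dist u v + G.dist v y := by exact_mod_cast hG.dist_triangle
    simp only [f]
    linarith
  have hx : G.dist x y - (1 - α) ≤ ∑ u, f u * mMeas G α x u := by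
    have hnbr : ∀ u ∈ G.neighborFinset x, (G.dist x y : ℝ) - 1 ≤ f u := fun u hu => by
      have h := hG.dist_triangle (u := x) (v := u) (w := y)
      rw [dist_eq_one_iff_adj.2 ((mem_neighborFinset G x u).1 hu)] at h
      simp only [f]
      linarith [(by exact_mod_cast h : (G.dist x y : ℝ) ≤ 1 + G.dist u y)]
    have hsum := card_nsmul_le_sum _ _ _ hnbr
    rw [card_neighborFinset_eq_degree, nsmul_eq_mul] at hsum
    have hmean := mul_le_mul_of_nonneg_left hsum
      (div_nonneg (sub_nonneg.2 h1) (Nat.cast_nonneg (G.degree x)))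
    have hcancel : (1 - α) / G.degree x * (G.degree x * ((G.dist x y : ℝ) - 1))
        = (1 - α) * ((G.dist x y : ℝ) - 1) := by
      field_simp [hdeg x]
    rw [hcancel] at hmean
    rw [sum_mul_mMeas]
    simp only [f] at hmean ⊢
    linarith
  have hy : ∑ u, f u * mMeas G α y u = 1 - α := by
    have hnbr : ∑ u ∈ G.neighborFinset y, f u = G.degree y := by
      rw [← card_neighborFinset_eq_degree, cast_card]
      exact sum_congr rfl fun u hu => by
        simp [f, dist_eq_one_iff_adj.2 ((mem_neighborFinset G y u).1 hu).symm]
    rw [sum_mul_mMeas, hnbr, div_mul_cancel₀ _ (hdeg y)]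
    simp [f]
  have := sum_sub_sum_le_wass hLip (exists_isCoupling_mMeas hG.preconnected h0 h1 x y)
  linarith

end RandomWalk

lemma MonotoneOn.exists_tendsto_nhdsLT_le {α β : Type*} [LinearOrder α] [TopologicalSpace α]
    [OrderTopology α] [ConditionallyCompleteLinearOrder β] [TopologicalSpace β] [OrderTopology β]
    {f : α → β} {a b : α} {M : β} (hne : (Set.Ioo a b).Nonempty) (hf : MonotoneOn f (Set.Ioo a b))
    (hM : ∀ x ∈ Set.Ioo a b, f x ≤ M) :
    ∃ L, Tendsto f (𝓝[<] b) (𝓝 L) ∧ L ≤ M :=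
  ⟨_, hf.tendsto_nhdsWithin_Ioo_left hne ⟨M, Set.forall_mem_image.2 hM⟩,
    csSup_le (hne.image f) (Set.forall_mem_image.2 hM)⟩

section Curvature

variable {V : Type*} [Fintype V] [DecidableEq V] {G : SimpleGraph V} [DecidableRel G.Adj]
  [Nontrivial V] {x y : V}

lemma le_kappaAlpha (hG : G.Connected) (hxy : x ≠ y) {a b : ℝ} (h0 : 0 ≤ a) (hab : a ≤ b)
    (hb : b < 1) : (1 - b) / (1 - a) * kappaAlpha G a x y ≤ kappaAlpha G b x y := by
  have hd : (0 : ℝ) < G.dist x y := by exact_mod_cast hG.pos_dist_of_ne hxy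
  set c := (1 - b) / (1 - a)
  have hW : Wass G (mMeas G b x) (mMeas G b y) / G.dist x y
      ≤ c * (Wass G (mMeas G a x) (mMeas G a y) / G.dist x y) + (1 - c) :=
    (div_le_iff₀ hd).2 ((wass_mMeas_le hG.preconnected h0 hab hb x y).trans_eq
      (by rw [add_mul, mul_assoc, div_mul_cancel₀ _ hd.ne']))
  unfold kappaAlpha
  linarith

lemma kappaAlpha_le (hG : G.Connected) (hxy : x ≠ y) {α : ℝ} (h0 : 0 ≤ α) (h1 : α ≤ 1) :
    kappaAlpha G α x y ≤ 2 * (1 - α) / G.dist x y := by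
  have hd : (0 : ℝ) < G.dist x y := by exact_mod_cast hG.pos_dist_of_ne hxy
  have hW := div_le_div_of_nonneg_right (dist_sub_le_wass_mMeas hG h0 h1 x y) hd.le
  rw [sub_div, div_self hd.ne'] at hW
  unfold kappaAlpha
  linarith

end Curvature

theorem stmt10 {V : Type*} [Fintype V] [DecidableEq V]
    (G : SimpleGraph V) [DecidableRel G.Adj]
    (hconn : G.Connected) (hcard : 1 < Fintype.card V)
    (x y : V) (hxy : x ≠ y) :
    (∀ a b : ℝ, 0 ≤ a → a ≤ b → b < 1 →
      kappaAlpha G a x y / (1 - a) ≤ kappaAlpha G b x y / (1 - b)) ∧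
    (∀ a : ℝ, 0 ≤ a → a < 1 →
      kappaAlpha G a x y / (1 - a) ≤ 2 / (G.dist x y : ℝ)) ∧
    (∃ L : ℝ, Filter.Tendsto (fun a => kappaAlpha G a x y / (1 - a)) (𝓝[<] (1 : ℝ)) (𝓝 L) ∧
      L ≤ 2 / (G.dist x y : ℝ)) := by
  have : Nontrivial V := Fintype.one_lt_card_iff_nontrivial.mp hcard
  have hmono : ∀ a b : ℝ, 0 ≤ a → a ≤ b → b < 1 →
      kappaAlpha G a x y / (1 - a) ≤ kappaAlpha G b x y / (1 - b) := by
    intro a b h0 hab hb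
    have hb' : 1 - b ≠ 0 := by linarith
    calc kappaAlpha G a x y / (1 - a)
        = (1 - b) / (1 - a) * kappaAlpha G a x y / (1 - b) := by field_simp
      _ ≤ kappaAlpha G b x y / (1 - b) :=
        div_le_div_of_nonneg_right (le_kappaAlpha hconn hxy h0 hab hb) (by linarith)
  have hbound : ∀ a : ℝ, 0 ≤ a → a < 1 →
      kappaAlpha G a x y / (1 - a) ≤ 2 / (G.dist x y : ℝ) := by
    intro a h0 ha
    have ha' : 1 - a ≠ 0 := by linarith
    calc kappaAlpha G a x y / (1 - a) ≤ 2 * (1 - a) / G.dist x y / (1 - a) :=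
          div_le_div_of_nonneg_right (kappaAlpha_le hconn hxy h0 ha.le) (by linarith)
      _ = 2 / G.dist x y := by field_simp
  exact ⟨hmono, hbound, MonotoneOn.exists_tendsto_nhdsLT_le (Set.nonempty_Ioo.2 zero_lt_one)
    (fun a ha b hb hab => hmono a b ha.1.le hab hb.2) fun a ha => hbound a ha.1.le ha.2⟩
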